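/- The right-angled Artin group functor A : Gph → Grp reflects isomorphisms: if φ : Γ → Δ is a graph homomorphism such that the induced group homomorphism Aφ : AΓ → AΔ is an isomorphism of groups, then φ is an isomorphism of graphs. -/

import Mathlib

/-- A (reflexive, symmetric) graph: a set of vertices with a reflexive
symmetric relation. -/
structure Gph : Type 1 where
  V : Type
  rel : V → V → Prop
  refl : ∀ v, rel v v
  symm : ∀ {v w}, rel v w → rel w v

/-- A homomorphism of graphs: a function on vertices preserving the relation. -/
@[ext]
structure GphHom (Γ Δ : Gph) where
  toFun : Γ.V → Δ.V
  map_rel : ∀ {v w}, Γ.rel v w → Δ.rel (toFun v) (toFun w)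

/-- The identity graph homomorphism. -/
def GphHom.id (Γ : Gph) : GphHom Γ Γ :=
  ⟨fun v => v, fun h => h⟩

/-- Composition of graph homomorphisms. -/
def GphHom.comp {Γ Δ Θ : Gph} (ψ : GphHom Δ Θ) (φ : GphHom Γ Δ) : GphHom Γ Θ :=
  ⟨fun v => ψ.toFun (φ.toFun v), fun h => ψ.map_rel (φ.map_rel h)⟩

/-- The commutator relators of the right-angled Artin group of `Γ`. -/
def raagRels (Γ : Gph) : Set (FreeGroup Γ.V) :=
  { r | ∃ v w, Γ.rel v w ∧
      r = FreeGroup.of v * FreeGroup.of w * (FreeGroup.of v)⁻¹ * (FreeGroup.of w)⁻¹ }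

/-- The right-angled Artin group of a graph `Γ`: generated by the vertices,
with commutation relations given by the edges. -/
abbrev Raag (Γ : Gph) : Type :=
  PresentedGroup (raagRels Γ)

/-- The image of a vertex `v` as a generator of the right-angled Artin group. -/
def Raag.of {Γ : Gph} (v : Γ.V) : Raag Γ :=
  PresentedGroup.of v

/-- Related vertices commute in the right-angled Artin group. -/
theorem Raag.commute_of {Γ : Gph} {v w : Γ.V} (h : Γ.rel v w) :
    Commute (Raag.of v) (Raag.of w) := by
  have h1 : (PresentedGroup.mk (raagRels Γ))
      (FreeGroup.of v * FreeGroup.of w * (FreeGroup.of v)⁻¹ * (FreeGroup.of w)⁻¹) = 1 := by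
    apply (QuotientGroup.eq_one_iff _).2
    exact Subgroup.subset_normalClosure ⟨v, w, h, rfl⟩
  rw [← commutatorElement_eq_one_iff_commute]
  simpa only [commutatorElement_def, map_mul, map_inv, Raag.of, PresentedGroup.of] using h1

/-- The universal property of the right-angled Artin group. -/
def Raag.lift {Γ : Gph} {G : Type*} [Group G] (f : Γ.V → G)
    (hf : ∀ {v w}, Γ.rel v w → Commute (f v) (f w)) : Raag Γ →* G :=
  PresentedGroup.toGroup (f := f) (by
    rintro r ⟨v, w, hvw, rfl⟩
    have := commutatorElement_eq_one_iff_commute.2 (hf hvw)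
    rw [commutatorElement_def] at this
    simpa only [map_mul, map_inv, FreeGroup.lift_apply_of] using this)

@[simp]
theorem Raag.lift_of {Γ : Gph} {G : Type*} [Group G] (f : Γ.V → G)
    (hf : ∀ {v w}, Γ.rel v w → Commute (f v) (f w)) (v : Γ.V) :
    Raag.lift f hf (Raag.of v) = f v :=
  PresentedGroup.toGroup.of _

theorem Raag.hom_ext {Γ : Gph} {G : Type*} [Group G] {f g : Raag Γ →* G}
    (h : ∀ v, f (Raag.of v) = g (Raag.of v)) : f = g :=
  PresentedGroup.ext h

/-- The group homomorphism `Aφ` induced by a graph homomorphism `φ`. -/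
def GphHom.map {Γ Δ : Gph} (φ : GphHom Γ Δ) : Raag Γ →* Raag Δ :=
  Raag.lift (fun v => Raag.of (φ.toFun v)) (fun h => Raag.commute_of (φ.map_rel h))

@[simp]
theorem GphHom.map_of {Γ Δ : Gph} (φ : GphHom Γ Δ) (v : Γ.V) :
    φ.map (Raag.of v) = Raag.of (φ.toFun v) :=
  Raag.lift_of _ (fun h => Raag.commute_of (φ.map_rel h)) v

/-- The commutation graph of a group `G`: vertices are elements of `G`,
related exactly when they commute. -/
abbrev commGraph (G : Type) [Group G] : Gph where
  V := G
  rel g h := g * h = h * g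
  refl _ := rfl
  symm h := h.symm

/-- `AC G`: the right-angled Artin group of the commutation graph of `G`. -/
abbrev AC (G : Type) [Group G] : Type :=
  Raag (commGraph G)

/-- `ACf : ACG →* ACH`, `[g] ↦ [f g]`, induced by a group homomorphism `f`. -/
def ACmap {G H : Type} [Group G] [Group H] (f : G →* H) : AC G →* AC H :=
  GphHom.map (Γ := commGraph G) (Δ := commGraph H)
    ⟨f, fun {a b} h => show f a * f b = f b * f a by
      rw [← map_mul, show a * b = b * a from h, map_mul]⟩

@[simp]
theorem ACmap_of {G H : Type} [Group G] [Group H] (f : G →* H) (g : G) :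
    ACmap f (Raag.of (Γ := commGraph G) g) = Raag.of (Γ := commGraph H) (f g) :=
  GphHom.map_of _ _

/-- The counit `ε_G : ACG →* G`, `[g] ↦ g`. -/
def ACcounit (G : Type) [Group G] : AC G →* G :=
  Raag.lift (Γ := commGraph G) (fun g => g) (fun h => h)

@[simp]
theorem ACcounit_of {G : Type} [Group G] (g : G) :
    ACcounit G (Raag.of (Γ := commGraph G) g) = g :=
  Raag.lift_of (Γ := commGraph G) (fun g => g) (fun h => h) g

/-- The comultiplication `δ_G : ACG →* AC(ACG)`, `[g] ↦ [[g]]`. -/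
def ACcomul (G : Type) [Group G] : AC G →* AC (AC G) :=
  Raag.lift (Γ := commGraph G)
    (fun g => Raag.of (Γ := commGraph (AC G)) (Raag.of (Γ := commGraph G) g))
    (fun h => Raag.commute_of (Raag.commute_of h))

@[simp]
theorem ACcomul_of {G : Type} [Group G] (g : G) :
    ACcomul G (Raag.of (Γ := commGraph G) g) =
      Raag.of (Γ := commGraph (AC G)) (Raag.of (Γ := commGraph G) g) :=
  Raag.lift_of (Γ := commGraph G) _ (fun h => Raag.commute_of (Raag.commute_of h)) g

/-- The canonical `AC`-coalgebra structure map on a right-angled Artin group,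
sending each vertex generator `v` to `[v]`. -/
def raagCoalgStr (Γ : Gph) : Raag Γ →* AC (Raag Γ) :=
  Raag.lift (fun v => Raag.of (Γ := commGraph (Raag Γ)) (Raag.of v))
    (fun h => Raag.commute_of (Raag.commute_of h))

@[simp]
theorem raagCoalgStr_of {Γ : Gph} (v : Γ.V) :
    raagCoalgStr Γ (Raag.of v) = Raag.of (Γ := commGraph (Raag Γ)) (Raag.of v) :=
  Raag.lift_of _ (fun h => Raag.commute_of (Raag.commute_of h)) v

/-- An `AC`-coalgebra structure on a group `G` is a group homomorphism
`𝔤 : G →* ACG` satisfying the counit and coassociativity laws. -/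
def IsACCoalgebra {G : Type} [Group G] (𝔤 : G →* AC G) : Prop :=
  (ACcounit G).comp 𝔤 = MonoidHom.id G ∧ (ACmap 𝔤).comp 𝔤 = (ACcomul G).comp 𝔤

/-- `f` is an `AC`-cohomomorphism from `(G, 𝔤)` to `(H, 𝔥)`. -/
def IsACCohom {G H : Type} [Group G] [Group H]
    (𝔤 : G →* AC G) (𝔥 : H →* AC H) (f : G →* H) : Prop :=
  𝔥.comp f = (ACmap f).comp 𝔤

/-! A graph is recovered from its right-angled Artin group through three kinds of homomorphisms
out of it. Abelianising to the free abelian group on the vertices shows that distinct vertices give distinct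
generators, and the character to `ℤ` counting occurrences of a vertex `w` kills the image of `Aφ`
unless `w` is hit by `φ`. For non-adjacent `v ≠ w`, sending `v, w` to the non-commuting
transpositions `(0 1), (1 2)` of `Fin 3` and every other vertex to `1` shows that the generators of
`v` and `w` do not commute. Hence a bijective `Aφ` forces `φ` to be a bijection on vertices that
reflects the relation. -/

namespace Raag

variable {Γ : Gph}

theorem of_injective : Function.Injective (Raag.of (Γ := Γ)) := by
  classical
  intro v w hvw
  have h := congrArg (Raag.lift (fun u => Multiplicative.ofAdd (Finsupp.single u (1 : ℤ)))
    (fun _ => Commute.all _ _)) hvw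
  simp only [Raag.lift_of] at h
  exact Finsupp.single_left_injective one_ne_zero (Multiplicative.ofAdd.injective h)

theorem commute_ite_of_not_rel [DecidableEq Γ.V] {G : Type*} [Group G] {v w : Γ.V}
    (hvw : ¬ Γ.rel v w) (a b : G) {x y : Γ.V} (hxy : Γ.rel x y) :
    Commute (if x = v then a else if x = w then b else 1)
      (if y = v then a else if y = w then b else 1) := by
  have h_one : ∀ z, ¬(z = v ∨ z = w) → (if z = v then a else if z = w then b else 1) = 1 := by
    rintro z hz
    simp only [not_or] at hz
    simp only [if_neg hz.1, if_neg hz.2]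
  by_cases hx : x = v ∨ x = w
  · by_cases hy : y = v ∨ y = w
    · obtain rfl : x = y := by
        rcases hx with rfl | rfl <;> rcases hy with rfl | rfl
        all_goals first | rfl | exact absurd hxy hvw | exact absurd (Γ.symm hxy) hvw
      exact Commute.refl _
    · rw [h_one y hy]
      exact Commute.one_right _
  · rw [h_one x hx]
    exact Commute.one_left _

theorem rel_iff_commute {v w : Γ.V} : Γ.rel v w ↔ Commute (Raag.of v) (Raag.of w) := by
  classical
  refine ⟨Raag.commute_of, fun h => ?_⟩
  by_contra hvw
  have hne : w ≠ v := fun e => hvw (e ▸ Γ.refl v)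
  have hswap := h.map (Raag.lift _ (commute_ite_of_not_rel hvw
    (Equiv.swap (0 : Fin 3) 1) (Equiv.swap 1 2)))
  simp only [Raag.lift_of, if_pos, if_neg hne] at hswap
  exact absurd hswap (by unfold Commute SemiconjBy; decide)

end Raag

namespace GphHom

variable {Γ Δ : Gph} (φ : GphHom Γ Δ)

theorem injective_of_map_injective (hφ : Function.Injective φ.map) :
    Function.Injective φ.toFun := fun v w hvw =>
  Raag.of_injective (hφ (by simp only [map_of, hvw]))

theorem surjective_of_map_surjective (hφ : Function.Surjective φ.map) :
    Function.Surjective φ.toFun := by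
  classical
  intro w
  by_contra! hw
  let χ : Raag Δ →* Multiplicative ℤ :=
    Raag.lift (fun u => if u = w then Multiplicative.ofAdd 1 else 1) (fun _ => Commute.all _ _)
  have hχφ : χ.comp φ.map = 1 := Raag.hom_ext fun v => by simp [χ, hw v]
  obtain ⟨x, hx⟩ := hφ (Raag.of w)
  have hχw : χ (Raag.of w) = 1 := hx ▸ DFunLike.congr_fun hχφ x
  simp [χ] at hχw

theorem rel_of_map_injective (hφ : Function.Injective φ.map) {v w : Γ.V}
    (h : Δ.rel (φ.toFun v) (φ.toFun w)) : Γ.rel v w := by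
  rw [Raag.rel_iff_commute, ← map_of, ← map_of] at h
  exact Raag.rel_iff_commute.2 (h.of_map hφ)

end GphHom

/-- The raag functor reflects isomorphisms: if `Aφ : AΓ →* AΔ` is an
isomorphism of groups (i.e. bijective), then `φ` is an isomorphism of graphs. -/
theorem raag_reflects_isomorphisms {Γ Δ : Gph} (φ : GphHom Γ Δ)
    (h : Function.Bijective φ.map) :
    ∃ ψ : GphHom Δ Γ, ψ.comp φ = GphHom.id Γ ∧ φ.comp ψ = GphHom.id Δ := by
  let e : Γ.V ≃ Δ.V := Equiv.ofBijective φ.toFun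
    ⟨φ.injective_of_map_injective h.1, φ.surjective_of_map_surjective h.2⟩
  have he : ∀ w, φ.toFun (e.symm w) = w := e.apply_symm_apply
  refine ⟨⟨e.symm, fun hrel => φ.rel_of_map_injective h.1 ?_⟩, ?_, ?_⟩
  · rwa [he, he]
  · ext v
    exact e.symm_apply_apply v
  · ext w
    exact he w
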